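/- Let f : ℝⁿ → ℝ be continuously differentiable with Lipschitz continuous gradient (Lipschitz constant L). If x is a point, α > 0 a step size, and d a unit vector such that f(x + α d) ≥ f(x) (an unsuccessful poll step), then the directional derivative ⟨∇f(x), d⟩ ≥ −(L/2)·α. -/

import Mathlib

/-! Along the segment from `x` to `y`, the Lipschitz bound on the gradient makes
`t ↦ f (x + t • (y - x)) - t ⟪∇f x, y - x⟫ - (L/2) t² ‖y - x‖²` antitone, which is the descent
lemma `f y ≤ f x + ⟪∇f x, y - x⟫ + (L/2) ‖y - x‖²`. At `y = x + α • d` an unsuccessful poll step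
gives `0 ≤ α ⟪∇f x, d⟫ + (L/2) α²`; divide by `α`. -/

open scoped RealInnerProductSpace

variable {F : Type*} [NormedAddCommGroup F] [InnerProductSpace ℝ F]

theorem LipschitzWith.inner_sub_le_mul_sq {G : F → F} {L : NNReal} (hG : LipschitzWith L G)
    (x v : F) {t : ℝ} (ht : 0 ≤ t) :
    ⟪G (x + t • v) - G x, v⟫ ≤ L * t * ‖v‖ ^ 2 :=
  calc ⟪G (x + t • v) - G x, v⟫ ≤ ‖G (x + t • v) - G x‖ * ‖v‖ := real_inner_le_norm _ _
    _ ≤ L * ‖(x + t • v) - x‖ * ‖v‖ := by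
        gcongr; simpa only [dist_eq_norm] using hG.dist_le_mul (x + t • v) x
    _ = L * t * ‖v‖ ^ 2 := by
        rw [add_sub_cancel_left, norm_smul, Real.norm_of_nonneg ht]; ring

variable [CompleteSpace F]

theorem HasGradientAt.hasDerivAt_comp_add_smul {f : F → ℝ} {g x v : F} {t : ℝ}
    (hf : HasGradientAt f g (x + t • v)) :
    HasDerivAt (fun s : ℝ ↦ f (x + s • v)) ⟪g, v⟫ t := by
  have hline : HasDerivAt (fun s : ℝ ↦ x + s • v) v t := by
    simpa using ((hasDerivAt_id t).smul_const v).const_add x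
  simpa [InnerProductSpace.toDual_apply_apply, Function.comp_def] using
    hf.hasFDerivAt.comp_hasDerivAt t hline

theorem le_add_inner_gradient_add_of_lipschitzWith_gradient {f : F → ℝ}
    (hf : Differentiable ℝ f) {L : NNReal} (hL : LipschitzWith L (gradient f)) (x y : F) :
    f y ≤ f x + ⟪gradient f x, y - x⟫ + L / 2 * ‖y - x‖ ^ 2 := by
  set v := y - x
  set φ : ℝ → ℝ := fun t ↦ f (x + t • v) - t * ⟪gradient f x, v⟫ - L / 2 * t ^ 2 * ‖v‖ ^ 2
  have hφ : ∀ t, HasDerivAt φ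
      (⟪gradient f (x + t • v) - gradient f x, v⟫ - L * t * ‖v‖ ^ 2) t := by
    intro t
    have := (((hf _).hasGradientAt.hasDerivAt_comp_add_smul (x := x) (v := v)).sub
      ((hasDerivAt_id t).mul_const ⟪gradient f x, v⟫)).sub
      (((hasDerivAt_pow 2 t).const_mul (L / 2 : ℝ)).mul_const (‖v‖ ^ 2))
    refine this.congr_deriv ?_
    rw [inner_sub_left, Nat.add_one_sub_one, pow_one]; push_cast; ring
  have hanti : AntitoneOn φ (Set.Ici 0) := by
    refine antitoneOn_of_hasDerivWithinAt_nonpos (convex_Ici 0)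
      (HasDerivAt.continuousOn fun t _ ↦ hφ t) (fun t _ ↦ (hφ t).hasDerivWithinAt) ?_
    intro t ht
    rw [interior_Ici] at ht
    linarith [hL.inner_sub_le_mul_sq x v (le_of_lt ht)]
  have hφ_one_le : φ 1 ≤ φ 0 := hanti Set.self_mem_Ici (Set.mem_Ici.2 zero_le_one) zero_le_one
  simp only [φ, v, one_smul, add_sub_cancel, zero_smul, add_zero] at hφ_one_le
  linarith

theorem unsuccessful_poll_step_directional_derivative_bound {n : ℕ}
    (f : EuclideanSpace ℝ (Fin n) → ℝ) (hf : ContDiff ℝ 1 f)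
    (L : NNReal) (hL : LipschitzWith L (gradient f))
    (x d : EuclideanSpace ℝ (Fin n)) (hd : ‖d‖ = 1)
    (α : ℝ) (hα : 0 < α)
    (hpoll : f x ≤ f (x + α • d)) :
    -((L : ℝ) / 2) * α ≤ inner ℝ (gradient f x) d := by
  have hdescent := le_add_inner_gradient_add_of_lipschitzWith_gradient
    (hf.differentiable one_ne_zero) hL x (x + α • d)
  rw [add_sub_cancel_left, inner_smul_right, norm_smul, hd, Real.norm_of_nonneg hα.le,
    mul_one] at hdescent
  have hscaled : α * (-((L : ℝ) / 2) * α) ≤ α * inner ℝ (gradient f x) d := by linarith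
  exact le_of_mul_le_mul_left hscaled hα
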